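/- arXiv:2104.08496 — 7 statements merged into one kernel-verified Lean document; each statement's English description precedes it below -/
import Mathlib

section
/- Let φ : R → S be a ring homomorphism such that S is free as an R-module with a basis containing the element 1. Then the sequence 0 → R → S → S ⊗_R S is exact, where the second map is φ and the third map sends α to α ⊗ 1 − 1 ⊗ α. In particular, φ(R) is strictly closed in S. -/
/-!
A basis of `S` containing `1` gives an `R`-linear retraction `c : S → R` of `algebraMap R S`,
namely the coordinate at `1`. It makes `algebraMap R S` injective, and applying the map
`x ⊗ y ↦ c x • y` to `α ⊗ 1 = 1 ⊗ α` yields `algebraMap R S (c α) = α`.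
-/

open scoped TensorProduct

/-- The strict closure of `R` in `S`. -/
def strictClosure (R : Type*) [CommRing R] (S : Type*) [CommRing S] [Algebra R S] : Set S :=
  {α : S | α ⊗ₜ[R] (1 : S) = (1 : S) ⊗ₜ[R] α}

section Retraction

variable {R S : Type*} [CommRing R] [CommRing S] [Algebra R S]

theorem algebraMap_mem_strictClosure (r : R) : algebraMap R S r ∈ strictClosure R S := by
  simp only [strictClosure, Set.mem_ofPred_eq, Algebra.algebraMap_eq_smul_one,
    TensorProduct.smul_tmul]

theorem leftInverse_algebraMap_of_map_one {c : S →ₗ[R] R} (hc : c 1 = 1) :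
    Function.LeftInverse c (algebraMap R S) := fun r => by
  rw [Algebra.algebraMap_eq_smul_one, c.map_smul, hc, smul_eq_mul, mul_one]

theorem algebraMap_apply_eq_of_mem_strictClosure {c : S →ₗ[R] R} (hc : c 1 = 1) {α : S}
    (hα : α ∈ strictClosure R S) : algebraMap R S (c α) = α := by
  have := congrArg (TensorProduct.lift (LinearMap.lsmul R S ∘ₗ c)) hα
  simpa only [TensorProduct.lift.tmul, LinearMap.comp_apply, LinearMap.lsmul_apply, hc,
    one_smul, Algebra.algebraMap_eq_smul_one] using this

theorem strictClosure_eq_range_of_map_one {c : S →ₗ[R] R} (hc : c 1 = 1) :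
    strictClosure R S = Set.range (algebraMap R S) :=
  Set.Subset.antisymm (fun _ hα => ⟨_, algebraMap_apply_eq_of_mem_strictClosure hc hα⟩)
    (Set.range_subset_iff.mpr algebraMap_mem_strictClosure)

end Retraction

/-- If `S` is a free `R`-module with a basis containing `1`, then
`0 → R → S → S ⊗_R S` is exact (the last map being `α ↦ α ⊗ 1 − 1 ⊗ α`);
in particular `φ(R)` is strictly closed in `S`. -/
theorem strictlyClosed_of_free_basis_with_one (R S : Type*) [CommRing R] [CommRing S]
    [Algebra R S] {ι : Type*} (b : Module.Basis ι R S) (i₀ : ι) (hb : b i₀ = 1) :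
    Function.Injective (algebraMap R S) ∧
      strictClosure R S = Set.range (algebraMap R S) := by
  have hc : b.coord i₀ 1 = 1 := by
    rw [← hb, Module.Basis.coord_apply, Module.Basis.repr_self, Finsupp.single_eq_same]
  exact ⟨(leftInverse_algebraMap_of_map_one hc).injective, strictClosure_eq_range_of_map_one hc⟩
end

section
/- Let S/R be an extension of commutative rings and M a maximal ideal of R. Then the strict closure R* of R in S satisfies R* ⊆ R + MS, where MS is the extension of M to S. -/
/-!
Reduce modulo `M`. The quotient map `S → S/MS` is `R`-linear, so it carries the strict closure
of `R` in `S` into the strict closure of the field `k = R/M` in `S/MS`. Over a field, `a ⊗ 1 = 1 ⊗ a`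
forces `a ∈ k · 1`: a functional `f` with `f 1 = 0` and `f a ≠ 0` turns the identity into
`f a • 1 = 0`. Lifting `a = r̄ · 1` back to `S` gives `α - r ∈ MS`.
-/

open scoped TensorProduct

theorem mem_span_singleton_of_tmul_eq_tmul {k V : Type*} [Field k] [AddCommGroup V]
    [Module k V] {v w : V} (h : v ⊗ₜ[k] w = w ⊗ₜ[k] v) (hw : w ≠ 0) :
    v ∈ Submodule.span k {w} := by
  by_contra hv
  obtain ⟨f, hfv, hf⟩ := Submodule.exists_dual_map_eq_bot_of_notMem hv inferInstance
  have hfw : f w = 0 :=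
    (Submodule.mem_bot k).mp (hf ▸ Submodule.mem_map_of_mem (Submodule.mem_span_singleton_self w))
  have : f v • w = f w • v := by
    simpa using congrArg ((TensorProduct.lid k V).toLinearMap ∘ₗ f.rTensor V) h
  rw [hfw, zero_smul, smul_eq_zero] at this
  exact this.elim hfv hw

theorem strictClosure_subset_range_of_field (k A : Type*) [Field k] [CommRing A] [Algebra k A] :
    strictClosure k A ⊆ Set.range (algebraMap k A) := by
  intro a ha
  nontriviality A
  obtain ⟨c, rfl⟩ :=
    Submodule.mem_span_singleton.mp (mem_span_singleton_of_tmul_eq_tmul ha one_ne_zero)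
  exact ⟨c, Algebra.algebraMap_eq_smul_one c⟩

theorem strictClosure_mapsTo {R R' S T : Type*} [CommRing R] [CommRing R'] [CommRing S]
    [CommRing T] [Algebra R S] [Algebra R R'] [Algebra R' T] [Algebra R T] [IsScalarTower R R' T]
    (φ : S →ₐ[R] T) : Set.MapsTo φ (strictClosure R S) (strictClosure R' T) := by
  intro α (hα : α ⊗ₜ[R] (1 : S) = (1 : S) ⊗ₜ[R] α)
  let ψ : S ⊗[R] S →ₗ[R] T ⊗[R'] T := TensorProduct.lift
    (((TensorProduct.mk R' T T).restrictScalars₁₂ R R).compl₁₂ φ.toLinearMap φ.toLinearMap)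
  simpa [ψ, strictClosure] using congrArg ψ hα

theorem strictClosure_subset_add_maximal_smul_general (R S : Type*) [CommRing R] [CommRing S]
    [Algebra R S]
    (M : Ideal R) (hM : M.IsMaximal) :
    strictClosure R S ⊆
      {s : S | ∃ r : R, ∃ m ∈ Ideal.map (algebraMap R S) M, s = algebraMap R S r + m} := by
  intro α hα
  let : Field (R ⧸ M) := Ideal.Quotient.field M
  obtain ⟨r', hr'⟩ := strictClosure_subset_range_of_field (R ⧸ M) _
    (strictClosure_mapsTo (Ideal.Quotient.mkₐ R (M.map (algebraMap R S))) hα)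
  obtain ⟨r, rfl⟩ := Ideal.Quotient.mk_surjective r'
  refine ⟨r, α - algebraMap R S r, ?_, by ring⟩
  rw [← Ideal.Quotient.eq_zero_iff_mem, map_sub, sub_eq_zero]
  exact hr'.symm

/-- For an extension `S/R` and a maximal ideal `M` of `R`, the strict closure of `R` in `S`
is contained in `R + MS`. -/
theorem strictClosure_subset_add_maximal_smul (R S : Type*) [CommRing R] [CommRing S]
    [Algebra R S] (hinj : Function.Injective (algebraMap R S))
    (M : Ideal R) (hM : M.IsMaximal) :
    strictClosure R S ⊆
      {s : S | ∃ r : R, ∃ m ∈ Ideal.map (algebraMap R S) M, s = algebraMap R S r + m} :=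
  strictClosure_subset_add_maximal_smul_general R S M hM
end

section
/- Let V = k[[t]] be the formal power series ring over a field k, R = k[[t^3, t^8, t^13]] and S = k[[t^3, t^5]]. Then R is strictly closed in S, i.e., the strict closure of R in S equals R. -/
/-!
Write `R = k[[t³, t⁸, t¹³]] ⊆ S = k[[t³, t⁵]]` and let `R` act on `k` through the constant
coefficient. The exponents `5` and `10` lie in `⟨3, 5⟩ \ ⟨3, 8, 13⟩` and cannot be written as
`i + j` with `0 < i ∈ ⟨3, 8, 13⟩` and `j ∈ ⟨3, 5⟩`, so for `n ∈ {5, 10}` the coefficient map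
`coeff n : S → k` is `R`-linear, and so is `coeff 0`. Applying the `R`-bilinear map
`x ⊗ y ↦ coeff n x * coeff 0 y` to `α ⊗ 1 = 1 ⊗ α` gives `coeff n α = coeff n 1 * coeff 0 α = 0`,
so a strictly closed `α` has no `t⁵` and `t¹⁰` terms, i.e. lies in `R`.
-/

open scoped TensorProduct

variable (k : Type*) [Field k]

/-- The subalgebra of `k[[t]]` consisting of power series supported on a submonoid `Γ ⊆ ℕ`.
For `Γ = ⟨3, 8, 13⟩` this is `k[[t³, t⁸, t¹³]]`, and for `Γ = ⟨3, 5⟩` it is `k[[t³, t⁵]]`. -/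
def PowerSeries.supportedIn (Γ : AddSubmonoid ℕ) : Subalgebra k (PowerSeries k) where
  carrier := {f | ∀ i : ℕ, i ∉ Γ → PowerSeries.coeff i f = 0}
  add_mem' := by
    intro f g hf hg i hi
    simp [hf i hi, hg i hi]
  mul_mem' := by
    intro f g hf hg i hi
    rw [PowerSeries.coeff_mul]
    refine Finset.sum_eq_zero fun p hp => ?_
    replace hp : p.1 + p.2 = i := Finset.HasAntidiagonal.mem_antidiagonal.mp hp
    by_cases h1 : p.1 ∈ Γ
    · by_cases h2 : p.2 ∈ Γ
      · exact absurd (hp ▸ add_mem h1 h2) hi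
      · rw [hg p.2 h2, mul_zero]
    · rw [hf p.1 h1, zero_mul]
  algebraMap_mem' := by
    intro c i hi
    have h0 : i ≠ 0 := fun h => hi (h ▸ zero_mem Γ)
    simp [PowerSeries.algebraMap_apply, PowerSeries.coeff_C, h0]

lemma supportedIn_mono {Γ₁ Γ₂ : AddSubmonoid ℕ} (h : Γ₁ ≤ Γ₂) :
    PowerSeries.supportedIn k Γ₁ ≤ PowerSeries.supportedIn k Γ₂ :=
  fun _ hf i hi => hf i fun hmem => hi (h hmem)

lemma closure_3_8_13_le : AddSubmonoid.closure ({3, 8, 13} : Set ℕ) ≤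
    AddSubmonoid.closure ({3, 5} : Set ℕ) := by
  rw [AddSubmonoid.closure_le]
  intro n hn
  have h3 : (3 : ℕ) ∈ AddSubmonoid.closure ({3, 5} : Set ℕ) :=
    AddSubmonoid.subset_closure (by simp)
  have h5 : (5 : ℕ) ∈ AddSubmonoid.closure ({3, 5} : Set ℕ) :=
    AddSubmonoid.subset_closure (by simp)
  rcases hn with h | h | h
  · exact h ▸ h3
  · exact h ▸ (show (8:ℕ) = 3 + 5 by norm_num) ▸ add_mem h3 h5
  · exact h ▸ (show (13:ℕ) = 3 + 5 + 5 by norm_num) ▸ add_mem (add_mem h3 h5) h5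

open PowerSeries

section StrictClosure

variable {R S : Type*} [CommRing R] [CommRing S] [Algebra R S]

theorem range_algebraMap_subset_strictClosure :
    Set.range (algebraMap R S) ⊆ strictClosure R S := by
  rintro _ ⟨r, rfl⟩
  show algebraMap R S r ⊗ₜ[R] 1 = 1 ⊗ₜ[R] algebraMap R S r
  rw [Algebra.algebraMap_eq_smul_one]
  exact TensorProduct.smul_tmul r 1 1

theorem mul_apply_one_eq_of_mem_strictClosure {A : Type*} [CommRing A] [Algebra R A]
    (f g : S →ₗ[R] A) {α : S} (hα : α ∈ strictClosure R S) :
    f α * g 1 = f 1 * g α := by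
  simpa using congrArg (LinearMap.mul' R A ∘ₗ TensorProduct.map f g) hα

end StrictClosure

section SupportedIn

variable {Γ₁ Γ₂ : AddSubmonoid ℕ}

theorem PowerSeries.coeff_mul_eq_constantCoeff_mul_of_supportedIn {n : ℕ}
    (hn : ∀ i ∈ Γ₁, ∀ j ∈ Γ₂, i + j = n → i = 0) {r x : k⟦X⟧}
    (hr : r ∈ supportedIn k Γ₁) (hx : x ∈ supportedIn k Γ₂) :
    coeff n (r * x) = constantCoeff r * coeff n x := by
  rw [coeff_mul, ← coeff_zero_eq_constantCoeff_apply]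
  refine Finset.sum_eq_single_of_mem (0, n) (by simp) fun p hp hp0 => ?_
  rw [Finset.HasAntidiagonal.mem_antidiagonal] at hp
  by_cases h₁ : p.1 ∈ Γ₁
  · by_cases h₂ : p.2 ∈ Γ₂
    · exact absurd (Prod.ext (hn _ h₁ _ h₂ hp) (by simp [← hp, hn _ h₁ _ h₂ hp])) hp0
    · rw [hx _ h₂, mul_zero]
  · rw [hr _ h₁, zero_mul]

theorem strictClosure_supportedIn_eq_range (h : Γ₁ ≤ Γ₂)
    (hgap : ∀ n ∈ Γ₂, n ∉ Γ₁ → ∀ i ∈ Γ₁, ∀ j ∈ Γ₂, i + j = n → i = 0) :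
    letI : Algebra (supportedIn k Γ₁) (supportedIn k Γ₂) :=
      (Subalgebra.inclusion (supportedIn_mono k h)).toRingHom.toAlgebra
    strictClosure (supportedIn k Γ₁) (supportedIn k Γ₂) =
      Set.range (algebraMap (supportedIn k Γ₁) (supportedIn k Γ₂)) := by
  let : Algebra (supportedIn k Γ₁) (supportedIn k Γ₂) :=
    (Subalgebra.inclusion (supportedIn_mono k h)).toRingHom.toAlgebra
  let : Algebra (supportedIn k Γ₁) k :=
    (constantCoeff.comp (supportedIn k Γ₁).val.toRingHom).toAlgebra
  let coeffₗ (n : ℕ) (hn : ∀ i ∈ Γ₁, ∀ j ∈ Γ₂, i + j = n → i = 0) :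
      supportedIn k Γ₂ →ₗ[supportedIn k Γ₁] k :=
    { toFun := fun x => coeff n (x : k⟦X⟧)
      map_add' := fun x y => map_add _ _ _
      map_smul' := fun r x => coeff_mul_eq_constantCoeff_mul_of_supportedIn k hn r.2 x.2 }
  refine Set.Subset.antisymm (fun α hα => ?_) range_algebraMap_subset_strictClosure
  refine ⟨⟨α, fun n hn₁ => ?_⟩, rfl⟩
  by_cases hn₂ : n ∈ Γ₂
  · have hn₀ : n ≠ 0 := fun h0 => hn₁ (h0 ▸ Γ₁.zero_mem)
    have hcoeff : coeff n (α : k⟦X⟧) * coeff 0 (1 : k⟦X⟧) = coeff n 1 * coeff 0 (α : k⟦X⟧) :=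
      mul_apply_one_eq_of_mem_strictClosure
        (coeffₗ n (hgap n hn₂ hn₁)) (coeffₗ 0 fun i _ j _ hij => by omega) hα
    simpa [coeff_one, hn₀] using hcoeff
  · exact α.2 n hn₂

end SupportedIn

section NumericalSemigroups

theorem mem_closure_3_5_cases {n : ℕ} (hn : n ∈ AddSubmonoid.closure ({3, 5} : Set ℕ)) :
    n = 0 ∨ n = 3 ∨ n = 5 ∨ n = 6 ∨ 8 ≤ n := by
  induction hn using AddSubmonoid.closure_induction with
  | mem x hx =>
    simp only [Set.mem_insert_iff, Set.mem_singleton_iff] at hx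
    omega
  | zero => omega
  | add x y _ _ _ _ => omega

theorem mem_closure_3_8_13_iff {n : ℕ} : n ∈ AddSubmonoid.closure ({3, 8, 13} : Set ℕ) ↔
    n = 0 ∨ n = 3 ∨ n = 6 ∨ n = 8 ∨ n = 9 ∨ 11 ≤ n := by
  constructor
  · intro hn
    induction hn using AddSubmonoid.closure_induction with
    | mem x hx =>
      simp only [Set.mem_insert_iff, Set.mem_singleton_iff] at hx
      omega
    | zero => omega
    | add x y _ _ _ _ => omega
  · intro hn
    induction n using Nat.strong_induction_on with
    | _ n ih =>
    have h3 : 3 ∈ AddSubmonoid.closure ({3, 8, 13} : Set ℕ) := AddSubmonoid.subset_closure (by simp)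
    have h8 : 8 ∈ AddSubmonoid.closure ({3, 8, 13} : Set ℕ) := AddSubmonoid.subset_closure (by simp)
    rcases (by omega : n = 0 ∨ n = 8 ∨ n = 11 ∨ n = 13 ∨
        (3 ≤ n ∧ (n - 3 = 0 ∨ n - 3 = 3 ∨ n - 3 = 6 ∨ n - 3 = 8 ∨ n - 3 = 9 ∨ 11 ≤ n - 3)))
      with rfl | rfl | rfl | rfl | ⟨hn3, hrec⟩
    · exact zero_mem _
    · exact h8
    · exact add_mem h3 h8
    · exact AddSubmonoid.subset_closure (by simp)
    · exact Nat.sub_add_cancel hn3 ▸ add_mem (ih _ (by omega) hrec) h3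

theorem closure_3_8_13_gap : ∀ n ∈ AddSubmonoid.closure ({3, 5} : Set ℕ),
    n ∉ AddSubmonoid.closure ({3, 8, 13} : Set ℕ) →
    ∀ i ∈ AddSubmonoid.closure ({3, 8, 13} : Set ℕ),
    ∀ j ∈ AddSubmonoid.closure ({3, 5} : Set ℕ), i + j = n → i = 0 := by
  intro n hn hn' i hi j hj hij
  rw [mem_closure_3_8_13_iff] at hn' hi
  have := mem_closure_3_5_cases hn
  have := mem_closure_3_5_cases hj
  omega

end NumericalSemigroups

/-- `R = k[[t³, t⁸, t¹³]]` is strictly closed in `S = k[[t³, t⁵]]`. -/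
theorem strictlyClosed_in_k_t3_t5 :
    letI R := PowerSeries.supportedIn k (AddSubmonoid.closure ({3, 8, 13} : Set ℕ))
    letI S := PowerSeries.supportedIn k (AddSubmonoid.closure ({3, 5} : Set ℕ))
    letI h : R ≤ S := supportedIn_mono k closure_3_8_13_le
    letI : Algebra ↥R ↥S := (Subalgebra.inclusion h).toRingHom.toAlgebra
    strictClosure ↥R ↥S = Set.range (algebraMap ↥R ↥S) :=
  strictClosure_supportedIn_eq_range k closure_3_8_13_le closure_3_8_13_gap
end

section
/- Let S/R be a module-finite extension of commutative rings with S generated as an R-module by 1, f₁, …, f_n, and suppose S admits an R-module presentation R^q → R^{n+1} → S → 0 where the surjection sends the standard basis to (1, f₁, …, f_n) and the first map is given by a matrix M. Then the strict closure R* of R in S is contained in R + J, where J is the ideal of S generated by all entries of the first row of M. -/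
open scoped TensorProduct

/-- Suppose `S` is a module-finite extension of `R` generated as an `R`-module by
`1, f₁, …, fₙ`, with an `R`-module presentation `R^q →[𝕄] R^{n+1} →[ε] S → 0` where
`ε` sends the standard basis to `(1, f₁, …, fₙ)`. Then `R* ⊆ R + J`, where `J` is the
ideal of `S` generated by the entries of the first row of `𝕄`. -/
theorem strictClosure_subset_of_presentation (R S : Type*) [CommRing R] [CommRing S]
    [Algebra R S] (hinj : Function.Injective (algebraMap R S))
    (n q : ℕ) (hn : 0 < n) (hq : 0 < q) (f : Fin n → S)
    (𝕄 : Matrix (Fin (n + 1)) (Fin q) R)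
    (ε : (Fin (n + 1) → R) →ₗ[R] S)
    (hε : ∀ v : Fin (n + 1) → R, ε v = ∑ i, v i • (Fin.cons 1 f : Fin (n + 1) → S) i)
    (hsurj : Function.Surjective ε)
    (hexact : Function.Exact 𝕄.mulVecLin ε) :
    strictClosure R S ⊆
      {s : S | ∃ r : R,
        ∃ j ∈ Ideal.span (Set.range fun l : Fin q => algebraMap R S (𝕄 0 l)),
          s = algebraMap R S r + j} := by
  intro α hα
  have hα' : α ⊗ₜ[R] (1 : S) = (1 : S) ⊗ₜ[R] α := hα
  -- tensored exact sequence
  have hex2 : Function.Exact (LinearMap.rTensor S 𝕄.mulVecLin) (LinearMap.rTensor S ε) :=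
    rTensor_exact S hexact hsurj
  obtain ⟨v, hv⟩ := hsurj α
  have hε0 : ε (Pi.single 0 1) = 1 := by
    rw [hε]
    simp [Pi.single_apply]
  set x : (Fin (n + 1) → R) ⊗[R] S := v ⊗ₜ 1 - (Pi.single 0 1) ⊗ₜ α with hx
  have hxz : LinearMap.rTensor S ε x = 0 := by
    simp [hx, LinearMap.rTensor_tmul, hv, hε0, hα']
  obtain ⟨y, hy⟩ := (hex2 x).mp hxz
  -- the extraction map
  let B : (Fin (n + 1) → R) →ₗ[R] S →ₗ[R] S :=
    LinearMap.mk₂ R (fun w s => w 0 • s)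
      (fun w w' s => by simp [add_smul])
      (fun c w s => by simp [mul_smul])
      (fun w s s' => by simp)
      (fun c w s => by rw [smul_comm])
  let ψ : ((Fin (n + 1) → R) ⊗[R] S) →ₗ[R] S := TensorProduct.lift B
  set J := Ideal.span (Set.range fun l : Fin q => algebraMap R S (𝕄 0 l)) with hJ
  have hmem : ∀ z : (Fin q → R) ⊗[R] S, ψ (LinearMap.rTensor S 𝕄.mulVecLin z) ∈ J := by
    intro z
    induction z using TensorProduct.induction_on with
    | zero => simp [Ideal.zero_mem]
    | tmul u s =>
        rw [LinearMap.rTensor_tmul]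
        have : ψ ((𝕄.mulVecLin u) ⊗ₜ s) = ∑ l, (𝕄 0 l * u l) • s := by
          simp [ψ, B, Matrix.mulVecLin_apply, Matrix.mulVec, dotProduct, Finset.sum_smul]
        rw [this]
        refine Ideal.sum_mem _ fun l _ => ?_
        have h1 : algebraMap R S (𝕄 0 l) ∈ J := Ideal.subset_span ⟨l, rfl⟩
        have : (𝕄 0 l * u l) • s = algebraMap R S (𝕄 0 l) * ((u l) • s) := by
          rw [mul_smul, Algebra.smul_def]
        rw [this]
        exact Ideal.mul_mem_right _ _ h1
    | add a b ha hb => rw [map_add, map_add]; exact Ideal.add_mem _ ha hb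
  have hψx : ψ x = algebraMap R S (v 0) - α := by
    simp [hx, ψ, B, Algebra.algebraMap_eq_smul_one]
  have key : algebraMap R S (v 0) - α ∈ J := by
    rw [← hψx, ← hy]; exact hmem y
  exact ⟨v 0, -(algebraMap R S (v 0) - α), neg_mem key, by ring⟩
end

section
/- Let S/R be a module-finite extension of commutative rings with S generated as an R-module by 1, f₁, …, f_n and S finitely presented over R. If f_i f_j ∈ R for all 1 ≤ i, j ≤ n, then R is strictly closed in S. -/
open scoped TensorProduct

/-- Suppose `S` is a module-finite extension of `R` generated as an `R`-module by
`1, f₁, …, fₙ` and finitely presented over `R`. If `fᵢ fⱼ` lies in (the image of) `R`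
for all `i, j`, then `R` is strictly closed in `S`. -/
theorem strictlyClosed_of_products_in_base (R S : Type*) [CommRing R] [CommRing S]
    [Algebra R S] (hinj : Function.Injective (algebraMap R S))
    (n q : ℕ) (hn : 0 < n) (hq : 0 < q) (f : Fin n → S)
    (𝕄 : Matrix (Fin (n + 1)) (Fin q) R)
    (ε : (Fin (n + 1) → R) →ₗ[R] S)
    (hε : ∀ v : Fin (n + 1) → R, ε v = ∑ i, v i • (Fin.cons 1 f : Fin (n + 1) → S) i)
    (hsurj : Function.Surjective ε)
    (hexact : Function.Exact 𝕄.mulVecLin ε)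
    (hprod : ∀ i j : Fin n, f i * f j ∈ Set.range (algebraMap R S)) :
    strictClosure R S = Set.range (algebraMap R S) := by
  -- Key claim: if `ε u = 0` then `u 0 • s` lies in the base ring for every `s`.
  have key : ∀ u : Fin (n + 1) → R, ε u = 0 → ∀ s : S,
      (u 0) • s ∈ (⊥ : Subalgebra R S) := by
    intro u hu s
    rw [hε] at hu
    rw [Fin.sum_univ_succ] at hu
    simp only [Fin.cons_zero, Fin.cons_succ] at hu
    have hu0 : (u 0) • (1 : S) = - ∑ j, u j.succ • f j := by
      linear_combination (norm := module) hu
    have hf : ∀ j : Fin n, (u 0) • f j ∈ (⊥ : Subalgebra R S) := by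
      intro j
      have : (u 0) • f j = ((u 0) • (1 : S)) * f j := by
        rw [smul_mul_assoc, one_mul]
      rw [this, hu0, neg_mul, Finset.sum_mul]
      apply Subalgebra.neg_mem
      apply Subalgebra.sum_mem
      intro m _
      rw [smul_mul_assoc]
      apply Subalgebra.smul_mem
      rw [Algebra.mem_bot]
      exact hprod m j
    obtain ⟨d, rfl⟩ := hsurj s
    rw [hε, Finset.smul_sum]
    apply Subalgebra.sum_mem
    intro i _
    induction i using Fin.cases with
    | zero =>
      simp only [Fin.cons_zero]
      rw [smul_comm]
      exact Subalgebra.smul_mem _ (Subalgebra.smul_mem _ (Subalgebra.one_mem _) _) _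
    | succ j =>
      simp only [Fin.cons_succ]
      rw [smul_comm]
      exact Subalgebra.smul_mem _ (hf j) _
  ext α
  simp only [strictClosure, Set.mem_setOf_eq, Set.mem_range]
  constructor
  · intro h
    obtain ⟨v, hv⟩ := hsurj α
    set e0 : Fin (n + 1) → R := Pi.single 0 1 with he0
    have hε0 : ε e0 = 1 := by
      rw [hε]
      rw [Fintype.sum_eq_single (0 : Fin (n + 1))]
      · simp [he0]
      · intro i hi
        simp [he0, Pi.single_apply, hi]
    let Ψ : S ⊗[R] (Fin (n + 1) → R) →ₗ[R] S :=
      (TensorProduct.rid R S).toLinearMap ∘ₗ LinearMap.lTensor S (LinearMap.proj 0)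
    have hΨ : ∀ (s : S) (u : Fin (n + 1) → R), Ψ (s ⊗ₜ[R] u) = u 0 • s := by
      intro s u
      simp [Ψ]
    have hw : LinearMap.lTensor S ε (α ⊗ₜ[R] e0 - 1 ⊗ₜ[R] v) = 0 := by
      rw [map_sub, LinearMap.lTensor_tmul, LinearMap.lTensor_tmul, hε0, hv, h, sub_self]
    obtain ⟨z, hz⟩ := (lTensor_exact S hexact hsurj _).mp hw
    have hmem : ∀ z : S ⊗[R] (Fin q → R),
        Ψ (LinearMap.lTensor S 𝕄.mulVecLin z) ∈ (⊥ : Subalgebra R S) := by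
      intro z
      induction z using TensorProduct.induction_on with
      | zero =>
        rw [map_zero, map_zero]
        exact zero_mem _
      | tmul s r =>
        rw [LinearMap.lTensor_tmul, hΨ]
        exact key (𝕄.mulVecLin r) ((hexact _).mpr ⟨r, rfl⟩) s
      | add x y hx hy =>
        rw [map_add, map_add]
        exact Subalgebra.add_mem _ hx hy
    have hΨw : Ψ (α ⊗ₜ[R] e0 - 1 ⊗ₜ[R] v) = α - v 0 • 1 := by
      rw [map_sub, hΨ, hΨ]
      simp [he0]
    have hmem2 : α - v 0 • 1 ∈ (⊥ : Subalgebra R S) := by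
      rw [← hΨw, ← hz]
      exact hmem z
    have h2 : α ∈ (⊥ : Subalgebra R S) := by
      have := Subalgebra.add_mem _ hmem2
        (Subalgebra.smul_mem _ (Subalgebra.one_mem (⊥ : Subalgebra R S)) (v 0))
      simpa using this
    rwa [Algebra.mem_bot, Set.mem_range] at h2
  · rintro ⟨r, rfl⟩
    rw [Algebra.algebraMap_eq_smul_one]
    exact TensorProduct.smul_tmul r (1 : S) (1 : S)
end

section
/- Let R be an arbitrary commutative ring and {R_λ}_{λ∈Λ} a family of intermediate rings between R and the integral closure R̄ of R in its total quotient ring Q(R). If each R_λ is a weakly Arf ring, then the intersection ⋂_λ R_λ is a weakly Arf ring. -/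
/-!
Every subalgebra `A` of `Q(R)` has `Q(R)` as its own total quotient ring, so being weakly Arf is
a statement inside `Q(R)`: whenever `x ∈ A` is a unit of `Q(R)` and `q, q'` are integral over `A`
with `qx, q'x ∈ A`, also `qq'x ∈ A` (take `q = y/x`, `q' = z/x`). If `x, q, q'` satisfy the
hypotheses for `⋂ R_λ`, they satisfy them for every `R_λ`, since integrality passes to larger
rings; hence `qq'x` lies in every `R_λ`.
-/

/-- A commutative ring `B` is weakly Arf if whenever `x` is a non-zerodivisor and
`y/x, z/x` (in the total quotient ring `Q(B)`) are integral over `B`, then `yz/x ∈ B`. -/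
def IsWeaklyArf (B : Type*) [CommRing B] : Prop :=
  ∀ (x : nonZeroDivisors B) (y z : B),
    IsIntegral B (IsLocalization.mk' (Localization (nonZeroDivisors B)) y x) →
    IsIntegral B (IsLocalization.mk' (Localization (nonZeroDivisors B)) z x) →
    ∃ b : B, algebraMap B (Localization (nonZeroDivisors B)) b =
      IsLocalization.mk' (Localization (nonZeroDivisors B)) (y * z) x

open IsLocalization

theorem IsIntegral.of_subalgebra_le {R K : Type*} [CommRing R] [CommRing K] [Algebra R K]
    {S T : Subalgebra R K} (h : S ≤ T) {q : K} (hq : IsIntegral S q) : IsIntegral T q := by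
  let := (Subalgebra.inclusion h).toAlgebra
  have : IsScalarTower S T K := .of_algebraMap_eq fun _ => rfl
  exact hq.tower_top

theorem isWeaklyArf_iff_of_isFractionRing (B K : Type*) [CommRing B] [CommRing K] [Algebra B K]
    [IsFractionRing B K] :
    IsWeaklyArf B ↔ ∀ (x : nonZeroDivisors B) (y z : B),
      IsIntegral B (mk' K y x) → IsIntegral B (mk' K z x) →
      ∃ b : B, algebraMap B K b = mk' K (y * z) x := by
  let e := algEquiv (nonZeroDivisors B) (Localization (nonZeroDivisors B)) K
  refine forall₃_congr fun x y z => ?_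
  have he : ∀ w : B, mk' K w x = e (mk' _ w x) := fun w => (algEquiv_mk' w x).symm
  simp only [he, isIntegral_algEquiv, ← e.commutes, e.injective.eq_iff]

namespace Subalgebra

variable {R K : Type*} [CommRing R] [CommRing K] [Algebra R K] [IsFractionRing R K]

theorem mem_nonZeroDivisors_iff_isUnit {A : Subalgebra R K} {a : A} :
    a ∈ nonZeroDivisors A ↔ IsUnit (a : K) := by
  refine ⟨fun ha => ?_, fun ha =>
    mem_nonZeroDivisors_of_injective (f := A.val) Subtype.val_injective ha.mem_nonZeroDivisors⟩
  rw [← IsUnit.mem_submonoid_iff, ← IsFractionRing.nonZeroDivisors_eq_isUnit R K,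
    mem_nonZeroDivisors_iff_right]
  intro k hk
  obtain ⟨⟨r, s⟩, hrs⟩ := surj (nonZeroDivisors R) k
  have hra : algebraMap R A r * a = 0 :=
    Subtype.val_injective <| by simp [← hrs, mul_right_comm, hk]
  have hr : algebraMap R K r = 0 := by
    simpa using congrArg Subtype.val (mem_nonZeroDivisors_iff_right.mp ha _ hra)
  exact (map_units K s).mul_left_eq_zero.mp (hrs.trans hr)

instance isFractionRing (A : Subalgebra R K) : IsFractionRing A K where
  map_units a := mem_nonZeroDivisors_iff_isUnit.mp a.2
  surj z := by
    obtain ⟨⟨r, s⟩, hrs⟩ := surj (nonZeroDivisors R) z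
    exact ⟨⟨algebraMap R A r, algebraMap R A s,
      mem_nonZeroDivisors_iff_isUnit.mpr (map_units K s)⟩, hrs⟩
  exists_of_eq h := ⟨1, by simpa using Subtype.val_injective h⟩

theorem isWeaklyArf_iff (A : Subalgebra R K) :
    IsWeaklyArf A ↔ ∀ x q q' : K, x ∈ A → IsUnit x → IsIntegral A q → IsIntegral A q' →
      q * x ∈ A → q' * x ∈ A → q * q' * x ∈ A := by
  rw [isWeaklyArf_iff_of_isFractionRing A K]
  constructor
  · intro harf x q q' hx hu hq hq' hqx hq'x
    let x' : nonZeroDivisors A := ⟨⟨x, hx⟩, mem_nonZeroDivisors_iff_isUnit.mpr hu⟩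
    have hmk : ∀ p (hp : p * x ∈ A), mk' K (⟨p * x, hp⟩ : A) x' = p := fun p hp =>
      mk'_eq_iff_eq_mul.mpr rfl
    obtain ⟨b, hb⟩ := harf x' ⟨q * x, hqx⟩ ⟨q' * x, hq'x⟩ (by rwa [hmk]) (by rwa [hmk])
    have hqq' : mk' K (⟨q * x, hqx⟩ * ⟨q' * x, hq'x⟩ : A) x' = q * q' * x :=
      mk'_eq_iff_eq_mul.mpr (show q * x * (q' * x) = q * q' * x * x by ring)
    exact hqq' ▸ hb ▸ b.2
  · intro harf x y z hy hz
    have hspec : ∀ w : A, mk' K w x * (x : A) = w := fun w => mk'_spec K w x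
    have hmem := harf x _ _ (x : A).2 (mem_nonZeroDivisors_iff_isUnit.mp x.2) hy hz
      ((hspec y).symm ▸ y.2) ((hspec z).symm ▸ z.2)
    refine ⟨⟨_, hmem⟩, eq_mk'_iff_mul_eq.mpr ?_⟩
    show mk' K y x * mk' K z x * (x : A) * (x : A) = (y : K) * z
    rw [← hspec y, ← hspec z]
    ring

end Subalgebra

theorem isWeaklyArf_iInf_general (R : Type*) [CommRing R] {Λ : Type*}
    (T : Λ → Subalgebra R (Localization (nonZeroDivisors R)))
    (harf : ∀ l : Λ, IsWeaklyArf ↥(T l)) :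
    IsWeaklyArf ↥(⨅ l : Λ, T l) := by
  simp only [Subalgebra.isWeaklyArf_iff] at harf ⊢
  intro x q q' hx hu hq hq' hqx hq'x
  rw [Algebra.mem_iInf] at hx hqx hq'x ⊢
  exact fun l => harf l x q q' (hx l) hu (hq.of_subalgebra_le (iInf_le T l))
    (hq'.of_subalgebra_le (iInf_le T l)) (hqx l) (hq'x l)

/-- If `{R_λ}` is a family of intermediate rings between `R` and the integral closure `R̄`
of `R` in `Q(R)`, and each `R_λ` is weakly Arf, then so is `⋂_λ R_λ`. -/
theorem isWeaklyArf_iInf (R : Type*) [CommRing R] {Λ : Type*}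
    (T : Λ → Subalgebra R (Localization (nonZeroDivisors R)))
    (hle : ∀ l : Λ, T l ≤ integralClosure R (Localization (nonZeroDivisors R)))
    (harf : ∀ l : Λ, IsWeaklyArf ↥(T l)) :
    IsWeaklyArf ↥(⨅ l : Λ, T l) :=
  isWeaklyArf_iInf_general R T harf
end

section
/- Let R = k[X, Y, Z]/(XY(X+Y)) with k = ℤ/(2), x, y, z, the images of X, Y, Z, and let R[t] be a polynomial ring over R. Then there is an R-algebra isomorphism R[t]/(xt, yt − y(x+y)z, t² − yzt) ≅ T₁, where T₁ = R + k[z]·zρ ⊆ R̄ and ρ = (ȳ, 0, 0) under the identification R̄ = R/xR × R/yR × R/(x+y)R. -/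
set_option synthInstance.maxHeartbeats 1000000
set_option maxHeartbeats 2000000

/-- The ideal `(XY(X+Y))` of `k[X, Y, Z]`, `k = ℤ/(2)`. -/
noncomputable def Jline : Ideal (MvPolynomial (Fin 3) (ZMod 2)) :=
  Ideal.span {MvPolynomial.X 0 * MvPolynomial.X 1 * (MvPolynomial.X 0 + MvPolynomial.X 1)}

/-- `R = k[X, Y, Z]/(XY(X+Y))` with `k = ℤ/(2)`. -/
def Rline : Type := MvPolynomial (Fin 3) (ZMod 2) ⧸ Jline

noncomputable instance : CommRing Rline :=
  inferInstanceAs (CommRing (MvPolynomial (Fin 3) (ZMod 2) ⧸ Jline))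

noncomputable instance : Algebra (ZMod 2) Rline :=
  inferInstanceAs (Algebra (ZMod 2) (MvPolynomial (Fin 3) (ZMod 2) ⧸ Jline))

/-- The image `x` of `X` in `R`. -/
noncomputable def xR : Rline := Ideal.Quotient.mk Jline (MvPolynomial.X 0)

/-- The image `y` of `Y` in `R`. -/
noncomputable def yR : Rline := Ideal.Quotient.mk Jline (MvPolynomial.X 1)

/-- The image `z` of `Z` in `R`. -/
noncomputable def zR : Rline := Ideal.Quotient.mk Jline (MvPolynomial.X 2)

/-- `R̄ = R/xR × R/yR × R/(x+y)R`, the integral closure of `R` in `Q(R)`. -/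
noncomputable abbrev Rbar3 : Type :=
  (Rline ⧸ Ideal.span {xR}) × (Rline ⧸ Ideal.span {yR}) × (Rline ⧸ Ideal.span {xR + yR})

/-- The canonical map `R → R̄`. -/
noncomputable def RtoRbar3 : Rline →+* Rbar3 :=
  (Ideal.Quotient.mk (Ideal.span {xR})).prod
    ((Ideal.Quotient.mk (Ideal.span {yR})).prod (Ideal.Quotient.mk (Ideal.span {xR + yR})))

/-- `ρ = (ȳ, 0, 0) ∈ R̄`. -/
noncomputable def ρ3 : Rbar3 := (Ideal.Quotient.mk (Ideal.span {xR}) yR, 0, 0)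

/-- The ideal `(xt, yt − y(x+y)z, t² − yzt)` of the polynomial ring `R[t]`. -/
noncomputable def I19 : Ideal (Polynomial Rline) :=
  Ideal.span {Polynomial.C xR * Polynomial.X,
    Polynomial.C yR * Polynomial.X - Polynomial.C (yR * (xR + yR) * zR),
    Polynomial.X ^ 2 - Polynomial.C (yR * zR) * Polynomial.X}

/-!
Every element of `R[t]/I` can be written `r + w(z)·t` with `r ∈ R`, `w ∈ k[z]`: since
`R = xR + yR + k[z]`, the relations `xt = 0`, `yt = y(x+y)z` and `t² = z·yt = y(x+y)z²` reduce
`R·t` to `k[z]·t`. Evaluation at `zρ = (zȳ, 0, 0)` sends `r + w(z)t` to `(r + w(z)zy, r, r)`, so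
the range is `R + k[z]·zρ`. If this vanishes, lift `r` to `P ∈ k[X,Y,Z]`: then `Y ∣ P`,
`X + Y ∣ P` and `X ∣ P + w(Z)ZY`. As `X`, `Y`, `X + Y` are pairwise non-associate primes,
`P = Y(X+Y)H` with `X ∣ (X+Y)H + w(Z)Z`; setting `X = Y = 0` gives `w = 0`, and then
`XY(X+Y) ∣ P`, i.e. `r = 0`.
-/

section PolynomialRing

open MvPolynomial

variable {K : Type*} [CommRing K]

theorem MvPolynomial.prime_X_zero_add_X_one [IsDomain K] (n : ℕ) :
    Prime (X 0 + X 1 : MvPolynomial (Fin (n + 2)) K) := by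
  rw [← MulEquiv.prime_iff (finSuccEquiv K (n + 1)), map_add, finSuccEquiv_X_zero,
    ← Fin.succ_zero_eq_one, finSuccEquiv_X_succ, ← sub_neg_eq_add, ← map_neg]
  exact Polynomial.prime_X_sub_C _

theorem MvPolynomial.exists_eq_X_zero_mul_add_X_one_mul_add_aeval_X_two
    (P : MvPolynomial (Fin 3) K) :
    ∃ (A B : MvPolynomial (Fin 3) K) (w : Polynomial K),
      P = X 0 * A + X 1 * B + Polynomial.aeval (X 2) w := by
  induction P using MvPolynomial.induction_on with
  | C c => exact ⟨0, 0, Polynomial.C c, by simp⟩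
  | add p q hp hq =>
    obtain ⟨A, B, w, rfl⟩ := hp
    obtain ⟨A', B', w', rfl⟩ := hq
    exact ⟨A + A', B + B', w + w', by rw [map_add]; ring⟩
  | mul_X p i hp =>
    obtain ⟨A, B, w, rfl⟩ := hp
    fin_cases i
    · exact ⟨X 0 * A + X 1 * B + Polynomial.aeval (X 2) w, 0, 0, by simp; ring⟩
    · exact ⟨0, X 0 * A + X 1 * B + Polynomial.aeval (X 2) w, 0, by simp; ring⟩
    · exact ⟨A * X 2, B * X 2, w * Polynomial.X, by simp; ring⟩

theorem MvPolynomial.eq_zero_and_X_zero_mul_X_one_mul_add_dvd [IsDomain K]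
    {P : MvPolynomial (Fin 3) K} {w : Polynomial K} (hY : X 1 ∣ P) (hXY : X 0 + X 1 ∣ P)
    (hX : X 0 ∣ P + Polynomial.aeval (X 2) w * X 2 * X 1) :
    w = 0 ∧ X 0 * X 1 * (X 0 + X 1) ∣ P := by
  have not_dvd : ∀ (v : Fin 3 → K) {a b : MvPolynomial (Fin 3) K},
      eval v a = 0 → eval v b ≠ 0 → ¬ a ∣ b :=
    fun v a b ha hb h => hb (zero_dvd_iff.mp (ha ▸ map_dvd (eval v) h))
  obtain ⟨A, rfl⟩ := hY
  obtain ⟨H, rfl⟩ := ((prime_X_zero_add_X_one 1).dvd_or_dvd hXY).resolve_left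
    (not_dvd ![-1, 1, 0] (by simp) (by simp))
  have hX' : X 0 ∣ X 1 * ((X 0 + X 1) * H + Polynomial.aeval (X 2) w * X 2) := by
    convert hX using 1; ring
  obtain ⟨Q, hQ⟩ :=
    (X_prime.dvd_or_dvd hX').resolve_left (not_dvd ![0, 1, 0] (by simp) (by simp))
  obtain rfl : w = 0 := by
    have h := congrArg (aeval ![0, 0, (Polynomial.X : Polynomial K)]) hQ
    simp only [map_add, map_mul, aeval_X, ← Polynomial.aeval_algHom_apply] at h
    simpa using h
  have hXH : X 0 ∣ (X 0 + X 1) * H := ⟨Q, by simpa using hQ⟩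
  obtain ⟨H', rfl⟩ :=
    (X_prime.dvd_or_dvd hXH).resolve_left (not_dvd ![0, 1, 0] (by simp) (by simp))
  exact ⟨rfl, H', by ring⟩

end PolynomialRing

theorem Ideal.Quotient.dvd_of_mk_dvd_mk {A : Type*} [CommRing A] {m P Q : A} (hQ : Q ∣ m)
    (h : Ideal.Quotient.mk (Ideal.span {m}) Q ∣ Ideal.Quotient.mk (Ideal.span {m}) P) :
    Q ∣ P := by
  obtain ⟨c, hc⟩ := h
  obtain ⟨C, rfl⟩ := Ideal.Quotient.mk_surjective c
  rw [← map_mul, Ideal.Quotient.eq, Ideal.mem_span_singleton] at hc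
  simpa using dvd_add (hQ.trans hc) (dvd_mul_right Q C)

noncomputable abbrev Rline.mk : MvPolynomial (Fin 3) (ZMod 2) →ₐ[ZMod 2] Rline :=
  Ideal.Quotient.mkₐ (ZMod 2) Jline

theorem Rline.mk_surjective : Function.Surjective Rline.mk :=
  Ideal.Quotient.mkₐ_surjective (ZMod 2) Jline

open MvPolynomial in
theorem Rline.mk_aeval_X_two (w : Polynomial (ZMod 2)) :
    Rline.mk (Polynomial.aeval (X 2) w) = Polynomial.aeval zR w :=
  (Polynomial.aeval_algHom_apply Rline.mk (X 2) w).symm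

open MvPolynomial in
theorem Rline.exists_eq_xR_mul_add_yR_mul_add_aeval (r : Rline) :
    ∃ (a b : Rline) (w : Polynomial (ZMod 2)), r = xR * a + yR * b + Polynomial.aeval zR w := by
  obtain ⟨P, rfl⟩ := Rline.mk_surjective r
  obtain ⟨A, B, w, rfl⟩ := exists_eq_X_zero_mul_add_X_one_mul_add_aeval_X_two P
  refine ⟨Rline.mk A, Rline.mk B, w, ?_⟩
  rw [map_add, map_add, map_mul, map_mul, Rline.mk_aeval_X_two]
  rfl

open MvPolynomial in
theorem Rline.eq_zero_and_eq_zero_of_dvd {r : Rline} {w : Polynomial (ZMod 2)} (hy : yR ∣ r)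
    (hxy : xR + yR ∣ r) (hx : xR ∣ r + Polynomial.aeval zR w * zR * yR) : r = 0 ∧ w = 0 := by
  obtain ⟨P, rfl⟩ := Rline.mk_surjective r
  rw [← Rline.mk_aeval_X_two] at hx
  obtain ⟨rfl, hP⟩ := eq_zero_and_X_zero_mul_X_one_mul_add_dvd
    (Ideal.Quotient.dvd_of_mk_dvd_mk ⟨X 0 * (X 0 + X 1), by ring⟩ hy)
    (Ideal.Quotient.dvd_of_mk_dvd_mk ⟨X 0 * X 1, by ring⟩ hxy)
    (Ideal.Quotient.dvd_of_mk_dvd_mk ⟨X 1 * (X 0 + X 1), by ring⟩ hx)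
  exact ⟨Ideal.Quotient.eq_zero_iff_dvd _ _ |>.mpr hP, rfl⟩

namespace T1

open Polynomial

noncomputable abbrev t : Rline[X] ⧸ I19 := Ideal.Quotient.mk I19 X

local notation "ι" => algebraMap Rline (Rline[X] ⧸ I19)

theorem mk_C (r : Rline) : Ideal.Quotient.mk I19 (C r) = ι r := rfl

theorem algebraMap_xR_mul_t : ι xR * t = 0 := by
  rw [← mk_C, ← map_mul, Ideal.Quotient.eq_zero_iff_mem]
  exact Ideal.subset_span (by simp)

theorem algebraMap_yR_mul_t : ι yR * t = ι (yR * (xR + yR) * zR) := by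
  rw [← mk_C, ← mk_C, ← map_mul, Ideal.Quotient.mk_eq_mk_iff_sub_mem]
  exact Ideal.subset_span (by simp)

theorem t_sq : t ^ 2 = ι (yR * (xR + yR) * zR ^ 2) := by
  have h : t ^ 2 = ι (yR * zR) * t := by
    rw [← mk_C, ← map_mul, ← map_pow, Ideal.Quotient.mk_eq_mk_iff_sub_mem]
    exact Ideal.subset_span (by simp)
  rw [h, mul_comm yR, map_mul, mul_assoc, algebraMap_yR_mul_t, ← map_mul]
  congr 1
  ring

theorem exists_algebraMap_mul_t_eq (r : Rline) :
    ∃ (s : Rline) (w : (ZMod 2)[X]), ι r * t = ι s + ι (aeval zR w) * t := by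
  obtain ⟨a, b, w, rfl⟩ := Rline.exists_eq_xR_mul_add_yR_mul_add_aeval r
  refine ⟨b * (yR * (xR + yR) * zR), w, ?_⟩
  rw [map_add, map_add, add_mul, add_mul, map_mul, map_mul, mul_comm (ι xR), mul_comm (ι yR),
    mul_assoc, mul_assoc, algebraMap_xR_mul_t, algebraMap_yR_mul_t, mul_zero, zero_add,
    ← map_mul]

theorem exists_eq_algebraMap_add_algebraMap_mul_t (A : Rline[X] ⧸ I19) :
    ∃ (r : Rline) (w : (ZMod 2)[X]), A = ι r + ι (aeval zR w) * t := by
  obtain ⟨q, rfl⟩ := Ideal.Quotient.mk_surjective A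
  induction q using Polynomial.induction_on with
  | C r => exact ⟨r, 0, by simp [mk_C]⟩
  | add p q hp hq =>
    obtain ⟨r, w, hp⟩ := hp
    obtain ⟨r', w', hq⟩ := hq
    exact ⟨r + r', w + w', by rw [map_add, hp, hq, map_add, map_add, map_add]; ring⟩
  | monomial n a ih =>
    obtain ⟨r, w, h⟩ := ih
    obtain ⟨s, v, hs⟩ := exists_algebraMap_mul_t_eq r
    refine ⟨s + aeval zR w * (yR * (xR + yR) * zR ^ 2), v, ?_⟩
    have ht : Ideal.Quotient.mk I19 (C a * X ^ (n + 1)) =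
        Ideal.Quotient.mk I19 (C a * X ^ n) * t := by
      rw [← map_mul, pow_succ, mul_assoc]
    rw [ht, h, add_mul, hs, mul_assoc, ← pow_two, t_sq]
    simp only [map_add, map_mul]
    ring

section Presentation

noncomputable local instance : Algebra Rline Rbar3 := RtoRbar3.toAlgebra

theorem algebraMap_Rbar3_apply (r : Rline) :
    algebraMap Rline Rbar3 r =
      (Ideal.Quotient.mk _ r, Ideal.Quotient.mk _ r, Ideal.Quotient.mk _ r) :=
  rfl

theorem algebraMap_mul_ρ3 (r : Rline) :
    algebraMap Rline Rbar3 r * ρ3 = (Ideal.Quotient.mk _ (r * yR), 0, 0) := by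
  rw [algebraMap_Rbar3_apply, ρ3, Prod.mk_mul_mk, Prod.mk_mul_mk, mul_zero, mul_zero, map_mul]

theorem I19_le_ker_aeval : I19 ≤ RingHom.ker (aeval (algebraMap Rline Rbar3 zR * ρ3)) := by
  rw [I19, Ideal.span_le]
  rintro p (rfl | rfl | rfl) <;>
    simp only [SetLike.mem_coe, RingHom.mem_ker, map_sub, map_mul, map_pow, aeval_C, aeval_X,
      algebraMap_mul_ρ3] <;>
    simp only [algebraMap_Rbar3_apply, Prod.mk_mul_mk, Prod.mk_sub_mk, Prod.pow_mk, mul_zero,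
      zero_pow two_ne_zero, sub_zero, zero_sub, Prod.mk_eq_zero, neg_eq_zero] <;>
    simp only [← map_mul, ← map_sub, ← map_pow, Ideal.Quotient.eq_zero_iff_dvd]
  · exact ⟨dvd_mul_right _ _, trivial, trivial⟩
  · exact ⟨⟨-(yR * zR), by ring⟩, ⟨(xR + yR) * zR, by ring⟩, ⟨yR * zR, by ring⟩⟩
  · exact ⟨⟨0, by ring⟩, trivial, trivial⟩

noncomputable def presentation : (Rline[X] ⧸ I19) →ₐ[Rline] Rbar3 :=
  Ideal.Quotient.liftₐ I19 (aeval (algebraMap Rline Rbar3 zR * ρ3)) fun _ ha =>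
    I19_le_ker_aeval ha

theorem presentation_t : presentation t = algebraMap Rline Rbar3 zR * ρ3 :=
  aeval_X _

theorem presentation_algebraMap_add_algebraMap_mul_t (r s : Rline) :
    presentation (ι r + ι s * t) =
      algebraMap Rline Rbar3 r + algebraMap Rline Rbar3 (s * zR) * ρ3 := by
  rw [map_add, map_mul, AlgHom.commutes, AlgHom.commutes, presentation_t, map_mul, mul_assoc]

theorem presentation_injective : Function.Injective presentation := by
  rw [injective_iff_map_eq_zero]
  intro A hA
  obtain ⟨r, w, rfl⟩ := exists_eq_algebraMap_add_algebraMap_mul_t A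
  rw [presentation_algebraMap_add_algebraMap_mul_t, algebraMap_mul_ρ3] at hA
  simp only [Prod.ext_iff, Prod.fst_add, Prod.snd_add, Prod.fst_zero, Prod.snd_zero,
    algebraMap_Rbar3_apply, add_zero] at hA
  simp only [← map_add, Ideal.Quotient.eq_zero_iff_dvd] at hA
  obtain ⟨rfl, rfl⟩ := Rline.eq_zero_and_eq_zero_of_dvd hA.2.1 hA.2.2 hA.1
  simp

theorem range_presentation : Set.range presentation =
    {b : Rbar3 | ∃ (r : Rline) (p : (ZMod 2)[X]),
      b = algebraMap Rline Rbar3 r + algebraMap Rline Rbar3 (aeval zR p * zR) * ρ3} := by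
  ext b
  constructor
  · rintro ⟨A, rfl⟩
    obtain ⟨r, p, rfl⟩ := exists_eq_algebraMap_add_algebraMap_mul_t A
    exact ⟨r, p, presentation_algebraMap_add_algebraMap_mul_t r _⟩
  · rintro ⟨r, p, rfl⟩
    exact ⟨_, presentation_algebraMap_add_algebraMap_mul_t r _⟩

end Presentation

end T1

/-- There is an `R`-algebra isomorphism `R[t]/(xt, yt − y(x+y)z, t² − yzt) ≅ T₁`, where
`T₁ = R + k[z]·zρ ⊆ R̄`, sending `t` to `zρ`: formally, an injective `R`-algebra map
`ψ : R[t]/I → R̄` with `ψ(t) = zρ` whose range is `R + k[z]·zρ`. -/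
theorem presentation_of_T1 :
    letI : Algebra Rline Rbar3 := RtoRbar3.toAlgebra
    ∃ ψ : (Polynomial Rline ⧸ I19) →ₐ[Rline] Rbar3,
      Function.Injective ψ ∧
      ψ (Ideal.Quotient.mk I19 Polynomial.X) = algebraMap Rline Rbar3 zR * ρ3 ∧
      Set.range ψ =
        {b : Rbar3 | ∃ (r : Rline) (p : Polynomial (ZMod 2)),
          b = algebraMap Rline Rbar3 r +
            algebraMap Rline Rbar3 (Polynomial.aeval zR p * zR) * ρ3} :=
  ⟨T1.presentation, T1.presentation_injective, T1.presentation_t, T1.range_presentation⟩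
end
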